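/- arXiv:2207.03475 — 5 statements merged into one kernel-verified Lean document; each statement's English description precedes it below -/
import Mathlib

section
/- Conditional Azuma–Hoeffding inequality: Let $(Y_i)_{i=0}^k$ be $\mathbb{R}^d$-valued martingale differences with respect to a filtration $(\mathcal{F}_i)_{i=0}^k$ with $Y_0 = 0$, and suppose there are deterministic constants $\delta_i$ with $|Y_i| \le \delta_i$ almost surely for each $i$. Set $S_k = \sum_{i=1}^k Y_i$ and $\Lambda = \delta_1^2 + \cdots + \delta_k^2$. Then almost surely $\mathbb{E}[\exp(|S_k|^2 / (4 d \Lambda)) \mid \mathcal{F}_0] \le 3$. -/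
open MeasureTheory ProbabilityTheory Real Finset
open scoped NNReal

/-!
Fix a coordinate `j` and a set `A ∈ ℱ 0`. Conditional Hoeffding's lemma, applied one increment
at a time through the tower property, gives `∫_A exp (t S_k^j) ≤ exp (t² Λ / 2) μ(A)`: under the
conditioned measure `μ[|A]` the coordinate `S_k^j` is sub-Gaussian with variance proxy `Λ`. Its
Gaussian tail `2 exp (-s² / (2Λ))` integrates, by the layer-cake formula, to
`∫ exp ((S_k^j)² / (4Λ)) dμ[|A] ≤ 3`, and convexity of `exp` averages the `d` coordinates into
`exp (|S_k|² / (4dΛ))`. A bound on the average over every `A ∈ ℱ 0` bounds the conditional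
expectation given `ℱ 0`.
-/

lemma integrable_exp_mul_of_abs_le {Ω : Type*} {m0 : MeasurableSpace Ω} {μ : Measure Ω}
    [IsFiniteMeasure μ] {Z : Ω → ℝ} {C : ℝ} (hZ : AEMeasurable Z μ) (hbdd : ∀ᵐ ω ∂μ, |Z ω| ≤ C)
    (t : ℝ) : Integrable (fun ω => exp (t * Z ω)) μ :=
  integrable_exp_mul_of_mem_Icc hZ (hbdd.mono fun _ => abs_le.mp)

lemma ae_abs_sum_le {Ω ι : Type*} {m0 : MeasurableSpace Ω} {μ : Measure Ω} {X : ι → Ω → ℝ}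
    {δ : ι → ℝ} (s : Finset ι) (hbdd : ∀ i ∈ s, ∀ᵐ ω ∂μ, |X i ω| ≤ δ i) :
    ∀ᵐ ω ∂μ, |∑ i ∈ s, X i ω| ≤ ∑ i ∈ s, δ i := by
  filter_upwards [(Filter.eventually_all_finset s).2 hbdd] with ω hω
  exact (abs_sum_le_sum_abs _ _).trans (sum_le_sum hω)

lemma exp_mul_le_cosh_add_mul {x δ : ℝ} (hx : |x| ≤ δ) (t : ℝ) :
    exp (t * x) ≤ cosh (t * δ) + sinh (t * δ) / δ * x := by
  obtain hδ | hδ := (abs_nonneg x |>.trans hx).eq_or_lt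
  · obtain rfl : x = 0 := abs_nonpos_iff.mp (hδ ▸ hx)
    simp [← hδ]
  obtain ⟨hxl, hxr⟩ := abs_le.mp hx
  -- `t * x` is the convex combination of `∓ t * δ` with weights `(δ ∓ x) / (2 * δ)`
  have key := convexOn_exp.2 (Set.mem_univ (-(t * δ))) (Set.mem_univ (t * δ))
    (div_nonneg (by linarith) (by positivity) : 0 ≤ (δ - x) / (2 * δ))
    (div_nonneg (by linarith) (by positivity) : 0 ≤ (δ + x) / (2 * δ))
    (by field_simp; ring)
  simp only [smul_eq_mul] at key
  calc exp (t * x) = exp ((δ - x) / (2 * δ) * -(t * δ) + (δ + x) / (2 * δ) * (t * δ)) := by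
        congr 1; field_simp; ring
    _ ≤ _ := key
    _ = _ := by rw [cosh_eq, sinh_eq]; field_simp; ring

lemma condExp_exp_mul_le_of_abs_le {Ω : Type*} {m m0 : MeasurableSpace Ω} {μ : Measure Ω}
    [IsFiniteMeasure μ] (hm : m ≤ m0) {X : Ω → ℝ} {δ : ℝ} (hint : Integrable X μ)
    (hX : μ[X|m] =ᵐ[μ] 0) (hbdd : ∀ᵐ ω ∂μ, |X ω| ≤ δ) (t : ℝ) :
    μ[fun ω => exp (t * X ω)|m] ≤ᵐ[μ] fun _ => exp (t ^ 2 * δ ^ 2 / 2) := by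
  set B := sinh (t * δ) / δ
  have hlin : μ[(fun _ => cosh (t * δ)) + B • X|m] =ᵐ[μ] fun _ => cosh (t * δ) := by
    filter_upwards [condExp_add (integrable_const _) (hint.smul B) m, condExp_smul B X m, hX]
      with ω h_add h_smul hXω
    rw [h_add, Pi.add_apply, condExp_const hm, h_smul]
    simp [hXω]
  have hmono := condExp_mono (m := m)
    (integrable_exp_mul_of_abs_le hint.aemeasurable hbdd t)
    ((integrable_const _).add (hint.smul B))
    (hbdd.mono fun ω hω => exp_mul_le_cosh_add_mul hω t)
  filter_upwards [hmono, hlin] with ω h_mono h_lin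
  calc _ ≤ _ := h_mono
    _ = cosh (t * δ) := h_lin
    _ ≤ exp ((t * δ) ^ 2 / 2) := cosh_le_exp_half_sq _
    _ = _ := by rw [mul_pow]

section Martingale

variable {Ω : Type*} {m0 : MeasurableSpace Ω} {μ : Measure Ω} [IsFiniteMeasure μ]
  {ℱ : Filtration ℕ m0} {X : ℕ → Ω → ℝ} {δ : ℕ → ℝ} {n : ℕ}

lemma setIntegral_exp_mul_sum_le (hX : StronglyAdapted ℱ X) (hint : ∀ i, Integrable (X i) μ)
    (hmart : ∀ i ∈ Icc 1 n, μ[X i|ℱ (i - 1)] =ᵐ[μ] 0)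
    (hbdd : ∀ i ∈ Icc 1 n, ∀ᵐ ω ∂μ, |X i ω| ≤ δ i)
    {A : Set Ω} (hA : MeasurableSet[ℱ 0] A) (t : ℝ) :
    ∫ ω in A, exp (t * ∑ i ∈ Icc 1 n, X i ω) ∂μ
      ≤ exp (t ^ 2 * (∑ i ∈ Icc 1 n, δ i ^ 2) / 2) * μ.real A := by
  induction n with
  | zero => simp
  | succ n ih =>
    have hsub : Icc 1 n ⊆ Icc 1 (n + 1) := Icc_subset_Icc_right n.le_succ
    have hlast : n + 1 ∈ Icc 1 (n + 1) := by simp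
    have hsplit (f : ℕ → ℝ) : ∑ i ∈ Icc 1 (n + 1), f i = ∑ i ∈ Icc 1 n, f i + f (n + 1) :=
      sum_Icc_succ_top (by omega) f
    specialize ih (fun i hi => hmart i (hsub hi)) (fun i hi => hbdd i (hsub hi))
    set S := fun ω => ∑ i ∈ Icc 1 n, X i ω
    have hS : StronglyMeasurable[ℱ n] S := Finset.stronglyMeasurable_fun_sum _ fun i hi =>
      (hX i).mono (ℱ.mono (mem_Icc.1 hi).2)
    have hSX : (fun ω => exp (t * S ω)) * (fun ω => exp (t * X (n + 1) ω))
        = fun ω => exp (t * ∑ i ∈ Icc 1 (n + 1), X i ω) := by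
      ext ω; simp only [Pi.mul_apply, hsplit, S, mul_add, exp_add]
    have hint_S := integrable_exp_mul_of_abs_le (hS.mono (ℱ.le n)).measurable.aemeasurable
      (ae_abs_sum_le _ fun i hi => hbdd i (hsub hi)) t
    have hint_X := integrable_exp_mul_of_abs_le (hint (n + 1)).aemeasurable (hbdd _ hlast) t
    have hint_SX : Integrable ((fun ω => exp (t * S ω)) * fun ω => exp (t * X (n + 1) ω)) μ := by
      rw [hSX]
      exact integrable_exp_mul_of_abs_le
        (Finset.aemeasurable_fun_sum _ fun i _ => (hint i).aemeasurable) (ae_abs_sum_le _ hbdd) t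
    have hcond := condExp_exp_mul_le_of_abs_le (ℱ.le n) (hint (n + 1))
      (by simpa using hmart _ hlast) (hbdd _ hlast) t
    have hpull := condExp_mul_of_stronglyMeasurable_left (m := ℱ n)
      (continuous_exp.comp_stronglyMeasurable (hS.const_mul t)) hint_SX hint_X
    have hstep : μ[(fun ω => exp (t * S ω)) * (fun ω => exp (t * X (n + 1) ω))|ℱ n]
        ≤ᵐ[μ] fun ω => exp (t * S ω) * exp (t ^ 2 * δ (n + 1) ^ 2 / 2) := by
      filter_upwards [hpull, hcond] with ω h_pull h_cond
      rw [h_pull]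
      exact mul_le_mul_of_nonneg_left h_cond (exp_pos _).le
    calc ∫ ω in A, exp (t * ∑ i ∈ Icc 1 (n + 1), X i ω) ∂μ
        = ∫ ω in A, (μ[(fun ω => exp (t * S ω)) * (fun ω => exp (t * X (n + 1) ω))|ℱ n]) ω ∂μ := by
          rw [setIntegral_condExp (ℱ.le n) hint_SX (ℱ.mono n.zero_le A hA), hSX]
      _ ≤ ∫ ω in A, exp (t * S ω) * exp (t ^ 2 * δ (n + 1) ^ 2 / 2) ∂μ :=
          integral_mono_ae integrable_condExp.restrict (hint_S.mul_const _).restrict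
            (ae_restrict_of_ae hstep)
      _ = (∫ ω in A, exp (t * S ω) ∂μ) * exp (t ^ 2 * δ (n + 1) ^ 2 / 2) :=
          integral_mul_const _ _
      _ ≤ exp (t ^ 2 * (∑ i ∈ Icc 1 n, δ i ^ 2) / 2) * μ.real A
            * exp (t ^ 2 * δ (n + 1) ^ 2 / 2) := by gcongr
      _ = _ := by rw [hsplit, mul_right_comm, ← exp_add]; ring_nf

lemma hasSubgaussianMGF_cond_sum (hX : StronglyAdapted ℱ X) (hint : ∀ i, Integrable (X i) μ)
    (hmart : ∀ i ∈ Icc 1 n, μ[X i|ℱ (i - 1)] =ᵐ[μ] 0)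
    (hbdd : ∀ i ∈ Icc 1 n, ∀ᵐ ω ∂μ, |X i ω| ≤ δ i)
    {A : Set Ω} (hA : MeasurableSet[ℱ 0] A) (hμA : μ A ≠ 0) :
    HasSubgaussianMGF (fun ω => ∑ i ∈ Icc 1 n, X i ω) (∑ i ∈ Icc 1 n, δ i ^ 2).toNNReal μ[|A] := by
  have := cond_isProbabilityMeasure (s := A) hμA
  refine ⟨fun t => ?_, fun t => ?_⟩
  · exact integrable_exp_mul_of_abs_le
      (Finset.aemeasurable_fun_sum _ fun i _ =>
        (hint i).aemeasurable.mono_ac cond_absolutelyContinuous)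
      (cond_absolutelyContinuous.ae_le (ae_abs_sum_le _ hbdd)) t
  · rw [mgf, ProbabilityTheory.cond, integral_smul_measure, smul_eq_mul,
      Real.coe_toNNReal _ (sum_nonneg fun i _ => sq_nonneg _), ENNReal.toReal_inv,
      inv_mul_le_iff₀ (ENNReal.toReal_pos hμA (measure_ne_top μ A))]
    calc _ ≤ _ := setIntegral_exp_mul_sum_le hX hint hmart hbdd hA t
      _ = _ := by rw [measureReal_def]; ring_nf

end Martingale

namespace ProbabilityTheory.HasSubgaussianMGF

variable {Ω : Type*} {m0 : MeasurableSpace Ω} {ν : Measure Ω} {X : Ω → ℝ} {c : ℝ≥0}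

lemma measureReal_abs_ge_le [IsFiniteMeasure ν] (h : HasSubgaussianMGF X c ν)
    {ε : ℝ} (hε : 0 ≤ ε) : ν.real {ω | ε ≤ |X ω|} ≤ 2 * exp (-ε ^ 2 / (2 * c)) := by
  have hsub : {ω | ε ≤ |X ω|} ⊆ {ω | ε ≤ X ω} ∪ {ω | ε ≤ (-X) ω} := fun ω (hω : ε ≤ |X ω|) =>
    (le_abs.mp hω : ε ≤ X ω ∨ ε ≤ -X ω)
  calc _ ≤ ν.real ({ω | ε ≤ X ω} ∪ {ω | ε ≤ (-X) ω}) := measureReal_mono hsub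
    _ ≤ ν.real {ω | ε ≤ X ω} + ν.real {ω | ε ≤ (-X) ω} := measureReal_union_le _ _
    _ ≤ exp (-ε ^ 2 / (2 * c)) + exp (-ε ^ 2 / (2 * c)) :=
      add_le_add (h.measure_ge_le hε) (h.neg.measure_ge_le hε)
    _ = _ := by ring

lemma measure_exp_sq_div_ge_le [IsFiniteMeasure ν] (h : HasSubgaussianMGF X c ν)
    (hc : 0 < c) {u : ℝ} (hu : 1 ≤ u) :
    ν {ω | u ≤ exp (X ω ^ 2 / (4 * c))} ≤ ENNReal.ofReal (2 * u ^ (-2 : ℝ)) := by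
  have hu0 : 0 < u := one_pos.trans_le hu
  have hlog : 0 ≤ 4 * c * log u := by have := log_nonneg hu; positivity
  have hsub : {ω | u ≤ exp (X ω ^ 2 / (4 * c))} ⊆ {ω | √(4 * c * log u) ≤ |X ω|} := by
    intro ω (hω : u ≤ exp (X ω ^ 2 / (4 * c)))
    rw [← log_le_iff_le_exp hu0, le_div_iff₀ (by positivity), mul_comm] at hω
    exact (sqrt_le_sqrt hω).trans_eq (sqrt_sq_eq_abs _)
  calc ν {ω | u ≤ exp (X ω ^ 2 / (4 * c))} ≤ ν {ω | √(4 * c * log u) ≤ |X ω|} := measure_mono hsub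
    _ = ENNReal.ofReal (ν.real {ω | √(4 * c * log u) ≤ |X ω|}) :=
      (ofReal_measureReal (measure_ne_top _ _)).symm
    _ ≤ ENNReal.ofReal (2 * exp (-√(4 * c * log u) ^ 2 / (2 * c))) :=
      ENNReal.ofReal_le_ofReal (h.measureReal_abs_ge_le (sqrt_nonneg _))
    _ = ENNReal.ofReal (2 * u ^ (-2 : ℝ)) := by
      rw [sq_sqrt hlog, rpow_def_of_pos hu0]
      congr 3
      field_simp
      ring

lemma lintegral_exp_sq_div_le_three [IsProbabilityMeasure ν]
    (h : HasSubgaussianMGF X c ν) :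
    ∫⁻ ω, ENNReal.ofReal (exp (X ω ^ 2 / (4 * c))) ∂ν ≤ 3 := by
  obtain rfl | hc := eq_zero_or_pos c
  · simp
  -- Level sets below `1` have measure at most `1`; above `1` they are bounded by `2 u⁻²`.
  have hX : AEMeasurable (fun ω => exp (X ω ^ 2 / (4 * c))) ν :=
    ((h.aemeasurable.pow_const 2).div_const _).exp
  rw [lintegral_eq_lintegral_meas_le ν (ae_of_all _ fun _ => (exp_pos _).le) hX,
    ← Set.Ioc_union_Ioi_eq_Ioi zero_le_one,
    lintegral_union measurableSet_Ioi Set.Ioc_disjoint_Ioi_same]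
  have htail : ∫⁻ u in Set.Ioi 1, ENNReal.ofReal (2 * u ^ (-2 : ℝ)) = 2 := by
    rw [← ofReal_integral_eq_lintegral_ofReal, integral_const_mul,
      integral_Ioi_rpow_of_lt (by norm_num) zero_lt_one]
    · norm_num
    · exact (integrableOn_Ioi_rpow_of_lt (by norm_num) zero_lt_one).const_mul _
    · filter_upwards [self_mem_ae_restrict measurableSet_Ioi] with u (hu : 1 < u)
      have := hu.le
      positivity
  calc _ ≤ (∫⁻ _ in Set.Ioc (0 : ℝ) 1, 1) + ∫⁻ u in Set.Ioi 1, ENNReal.ofReal (2 * u ^ (-2 : ℝ)) :=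
        add_le_add (setLIntegral_mono measurable_const fun _ _ => prob_le_one)
          (setLIntegral_mono' measurableSet_Ioi fun u hu =>
            h.measure_exp_sq_div_ge_le hc (le_of_lt hu))
    _ = 3 := by rw [htail, setLIntegral_const, Real.volume_Ioc]; norm_num

end ProbabilityTheory.HasSubgaussianMGF

lemma exp_norm_sq_div_le_sum {ι : Type*} [Fintype ι] [Nonempty ι] (x : EuclideanSpace ℝ ι)
    (a : ℝ) :
    exp (‖x‖ ^ 2 / (Fintype.card ι * a)) ≤ ∑ j, (Fintype.card ι : ℝ)⁻¹ * exp (x j ^ 2 / a) := by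
  have hcard : (Fintype.card ι : ℝ) ≠ 0 := Nat.cast_ne_zero.2 Fintype.card_ne_zero
  have hw : ∑ _j : ι, (Fintype.card ι : ℝ)⁻¹ = 1 := by simp [hcard]
  have hx : ‖x‖ ^ 2 / (Fintype.card ι * a) = ∑ j, (Fintype.card ι : ℝ)⁻¹ • (x j ^ 2 / a) := by
    simp only [EuclideanSpace.norm_sq_eq, Real.norm_eq_abs, sq_abs, smul_eq_mul, ← mul_sum,
      ← sum_div]
    field_simp
  rw [hx]
  exact convexOn_exp.map_sum_le (fun _ _ => by positivity) hw (fun _ _ => Set.mem_univ _)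

lemma lintegral_exp_norm_sq_div_le_three {Ω ι : Type*} {m0 : MeasurableSpace Ω} [Fintype ι]
    {ν : Measure Ω} [IsProbabilityMeasure ν] {Y : Ω → EuclideanSpace ℝ ι} {c : ℝ≥0}
    (h : ∀ j, HasSubgaussianMGF (fun ω => Y ω j) c ν) :
    ∫⁻ ω, ENNReal.ofReal (exp (‖Y ω‖ ^ 2 / (4 * Fintype.card ι * c))) ∂ν ≤ 3 := by
  cases isEmpty_or_nonempty ι
  · simp
  set w := ENNReal.ofReal (Fintype.card ι : ℝ)⁻¹
  have hw : ∑ _j : ι, w * 3 = 3 := by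
    rw [sum_const, card_univ, nsmul_eq_mul, ← mul_assoc, ← ENNReal.ofReal_natCast,
      ← ENNReal.ofReal_mul (by positivity),
      mul_inv_cancel₀ (Nat.cast_ne_zero.2 Fintype.card_ne_zero)]
    simp
  calc _ ≤ ∫⁻ ω, ∑ j, w * ENNReal.ofReal (exp (Y ω j ^ 2 / (4 * c))) ∂ν := by
        refine lintegral_mono fun ω => ?_
        rw [mul_comm 4, mul_assoc]
        refine (ENNReal.ofReal_le_ofReal (exp_norm_sq_div_le_sum _ _)).trans_eq ?_
        rw [ENNReal.ofReal_sum_of_nonneg fun _ _ => by positivity]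
        simp_rw [ENNReal.ofReal_mul (inv_nonneg.2 (Nat.cast_nonneg _)), w]
    _ = ∑ j, w * ∫⁻ ω, ENNReal.ofReal (exp (Y ω j ^ 2 / (4 * c))) ∂ν := by
        rw [lintegral_finsetSum' _ fun j _ => ?_]
        · exact sum_congr rfl fun j _ => lintegral_const_mul' _ _ ENNReal.ofReal_ne_top
        exact (((h j).aemeasurable.pow_const 2).div_const _).exp.ennreal_ofReal.const_mul _
    _ ≤ ∑ _j : ι, w * 3 := by
        gcongr with j
        exact (h j).lintegral_exp_sq_div_le_three
    _ = 3 := hw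

lemma condExp_le_of_forall_lintegral_cond_le {Ω : Type*} {m m0 : MeasurableSpace Ω}
    {μ : Measure Ω} [IsFiniteMeasure μ] (hm : m ≤ m0) {f : Ω → ℝ} (hf : Integrable f μ)
    (hf_nonneg : 0 ≤ᵐ[μ] f) {C : ℝ} (hC : 0 ≤ C)
    (h : ∀ A, MeasurableSet[m] A → μ A ≠ 0 → ∫⁻ ω, ENNReal.ofReal (f ω) ∂μ[|A] ≤ ENNReal.ofReal C) :
    μ[f|m] ≤ᵐ[μ] fun _ => C := by
  have hset (A : Set Ω) (hA : MeasurableSet[m] A) : ∫ ω in A, f ω ∂μ ≤ μ.real A * C := by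
    by_cases hμA : μ A = 0
    · simp [Measure.restrict_eq_zero.2 hμA, measureReal_def, hμA]
    have hlint := h A hA hμA
    rw [ProbabilityTheory.cond, lintegral_smul_measure, smul_eq_mul,
      ENNReal.inv_mul_le_iff hμA (measure_ne_top μ A)] at hlint
    rw [integral_eq_lintegral_of_nonneg_ae (ae_restrict_of_ae hf_nonneg) hf.1.restrict,
      measureReal_def, ← ENNReal.toReal_ofReal hC, ← ENNReal.toReal_mul]
    exact ENNReal.toReal_mono (by finiteness) hlint
  refine ae_le_of_ae_le_trim (hm := hm) <| ae_le_of_forall_setIntegral_le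
    (integrable_condExp.trim hm stronglyMeasurable_condExp) (integrable_const C) fun A hA _ => ?_
  rw [← setIntegral_trim hm stronglyMeasurable_condExp hA, setIntegral_condExp hm hf hA,
    setIntegral_const, measureReal_def, trim_measurableSet_eq hm hA, smul_eq_mul]
  exact hset A hA

theorem stmt_2_general {Ω : Type*} {m0 : MeasurableSpace Ω} (μ : Measure Ω) [IsProbabilityMeasure μ]
    {d : ℕ} (k : ℕ) (ℱ : ℕ → MeasurableSpace Ω)
    (hmono : Monotone ℱ) (hle : ∀ i, ℱ i ≤ m0)
    (Y : ℕ → Ω → EuclideanSpace ℝ (Fin d)) (δ : ℕ → ℝ)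
    (hadapted : ∀ i, StronglyMeasurable[ℱ i] (Y i))
    (hint : ∀ i, Integrable (Y i) μ)
    (hmart : ∀ i, 1 ≤ i → μ[Y i | ℱ (i - 1)] =ᵐ[μ] 0)
    (hbdd : ∀ i, 1 ≤ i → i ≤ k → ∀ᵐ ω ∂μ, ‖Y i ω‖ ≤ δ i) :
    μ[fun ω => Real.exp (‖∑ i ∈ Finset.Icc 1 k, Y i ω‖ ^ 2 /
        (4 * d * ∑ i ∈ Finset.Icc 1 k, δ i ^ 2)) | ℱ 0]
      ≤ᵐ[μ] fun _ => 3 := by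
  set Λ := ∑ i ∈ Icc 1 k, δ i ^ 2
  set G := fun ω => exp (‖∑ i ∈ Icc 1 k, Y i ω‖ ^ 2 / (4 * d * Λ))
  have hΛ : (Λ.toNNReal : ℝ) = Λ := Real.coe_toNNReal _ (sum_nonneg fun _ _ => sq_nonneg _)
  have hcoord_mart (j : Fin d) (i : ℕ) (hi : i ∈ Icc 1 k) :
      μ[fun ω => Y i ω j|ℱ (i - 1)] =ᵐ[μ] 0 := by
    filter_upwards [(EuclideanSpace.proj j).comp_condExp_comm (m := ℱ (i - 1)) (hint i),
      hmart i (mem_Icc.1 hi).1] with ω h_comm h_zero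
    simpa [h_zero, Function.comp_def] using h_comm.symm
  have hG_cond (A : Set Ω) (hA : MeasurableSet[ℱ 0] A) (hμA : μ A ≠ 0) :
      ∫⁻ ω, ENNReal.ofReal (G ω) ∂μ[|A] ≤ 3 := by
    have := cond_isProbabilityMeasure (s := A) hμA
    have hcoord (j : Fin d) :
        HasSubgaussianMGF (fun ω => (∑ i ∈ Icc 1 k, Y i ω) j) Λ.toNNReal μ[|A] := by
      simpa using hasSubgaussianMGF_cond_sum (ℱ := ⟨ℱ, hmono, hle⟩) (X := fun i ω => Y i ω j)
        (fun i => (EuclideanSpace.proj j).continuous.comp_stronglyMeasurable (hadapted i))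
        (fun i => (EuclideanSpace.proj (𝕜 := ℝ) j).integrable_comp (hint i)) (hcoord_mart j)
        (fun i hi => (hbdd i (mem_Icc.1 hi).1 (mem_Icc.1 hi).2).mono fun ω hω =>
          (PiLp.norm_apply_le _ j).trans hω) hA hμA
    simpa [G, hΛ] using lintegral_exp_norm_sq_div_le_three hcoord
  have hG_int : Integrable G μ := by
    refine ⟨?_, (hasFiniteIntegral_iff_ofReal (ae_of_all _ fun _ => (exp_pos _).le)).2 ?_⟩
    · exact (by fun_prop : Continuous fun x : EuclideanSpace ℝ (Fin d) =>
        exp (‖x‖ ^ 2 / (4 * d * Λ))).comp_aestronglyMeasurable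
        (Finset.aestronglyMeasurable_fun_sum _ fun i _ => (hint i).1)
    · simpa using (hG_cond Set.univ MeasurableSet.univ (by simp)).trans_lt ENNReal.ofNat_lt_top
  exact condExp_le_of_forall_lintegral_cond_le (hle 0) hG_int
    (ae_of_all _ fun _ => (exp_pos _).le) zero_le_three (by simpa using hG_cond)

/-- Conditional Azuma–Hoeffding inequality: for `ℝ^d`-valued martingale differences
`Y_1, …, Y_k` with `|Y_i| ≤ δ_i` a.s., `S_k = ∑ Y_i` and `Λ = ∑ δ_i²`, one has
`E[exp(|S_k|²/(4 d Λ)) | ℱ_0] ≤ 3` almost surely. -/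
theorem stmt_2 {Ω : Type*} {m0 : MeasurableSpace Ω} (μ : Measure Ω) [IsProbabilityMeasure μ]
    {d : ℕ} (k : ℕ) (ℱ : ℕ → MeasurableSpace Ω)
    (hmono : Monotone ℱ) (hle : ∀ i, ℱ i ≤ m0)
    (Y : ℕ → Ω → EuclideanSpace ℝ (Fin d)) (δ : ℕ → ℝ)
    (hY0 : Y 0 = 0)
    (hadapted : ∀ i, StronglyMeasurable[ℱ i] (Y i))
    (hint : ∀ i, Integrable (Y i) μ)
    (hmart : ∀ i, 1 ≤ i → μ[Y i | ℱ (i - 1)] =ᵐ[μ] 0)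
    (hbdd : ∀ i, 1 ≤ i → i ≤ k → ∀ᵐ ω ∂μ, ‖Y i ω‖ ≤ δ i) :
    μ[fun ω => Real.exp (‖∑ i ∈ Finset.Icc 1 k, Y i ω‖ ^ 2 /
        (4 * d * ∑ i ∈ Finset.Icc 1 k, δ i ^ 2)) | ℱ 0]
      ≤ᵐ[μ] fun _ => 3 :=
  stmt_2_general μ k ℱ hmono hle Y δ hadapted hint hmart hbdd
end

section
/- Path-by-path uniqueness from a Hölder flow (functional case): Let $\gamma : [0,1] \to \mathbb{R}^d$ be bounded measurable, $\alpha \in (0,1]$, $b \in L^1([0,1]; C^\alpha(\mathbb{R}^d;\mathbb{R}^d))$ (globally, i.e. $w(s,t) := \int_s^t \|b_r\|_{C^\alpha} dr$ is finite and continuous). Suppose the ODE $y_t = y_0 + \int_0^t b_r(y_r) dr + \gamma_t$ admits a semiflow $\Phi$ that is globally $\beta$-Hölder continuous in space, uniformly in times, with exponent $\beta \in (0,1]$ satisfying $\beta(1+\alpha) > 1$. Then for every $0 \le S \le T \le 1$ and $y \in \mathbb{R}^d$, the unique solution on $[S,T]$ with initial condition $y$ is $t \mapsto \Phi_{S \to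 t}(y)$. -/
/-!
Let `z` solve the equation on `[S, t]` and set `f s := Φ_{s→t}(z_s)`. On a short interval
`[s, s']` the solution `z` and the flow `Φ_{s→·}(z_s)` start at the same point, and with
`w := ∫_s^{s'} C` their maximal distance `A` satisfies `A ≤ A^α w`; for `w < 1` this bootstraps
to `A ≤ w^{1+α}`. Through the semiflow property and the `β`-Hölder bound,
`|f s' - f s| ≤ N w^{β(1+α)}`. Summing over a partition into `n` pieces of equal control shows
`|f t - f S| ≲ n^{1-β(1+α)} → 0`, so `z_t = f t = f S = Φ_{S→t}(y)`.
-/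

open Set MeasureTheory Filter Topology

theorem Real.le_rpow_one_add_of_le_rpow_mul {A W α : ℝ} (hA : 0 ≤ A) (hW0 : 0 ≤ W) (hW1 : W < 1)
    (hα0 : 0 ≤ α) (hα1 : α ≤ 1) (h : A ≤ A ^ α * W) : A ≤ W ^ (1 + α) := by
  have hA1 : A ≤ 1 := by
    by_contra! hA1
    have : A ^ α ≤ A := Real.rpow_le_self_of_one_le hA1.le hα1
    nlinarith
  have hAW : A ≤ W :=
    h.trans (mul_le_of_le_one_left hW0 (Real.rpow_le_one hA hA1 hα0))
  calc A ≤ A ^ α * W := h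
    _ ≤ W ^ α * W := by gcongr
    _ = W ^ (1 + α) := by rw [add_comm, Real.rpow_add' hW0 (by linarith), Real.rpow_one]

section Constancy

variable {X : Type*} [NormedAddCommGroup X] {f : ℝ → X} {F : ℝ → ℝ} {a b θ K ε : ℝ}

theorem norm_sub_le_nat_mul_rpow_of_norm_sub_le_rpow
    (hFm : MonotoneOn F (Icc a b)) (hFc : ContinuousOn F (Icc a b)) (hθ : 0 < θ) (hK : 0 ≤ K)
    (hf : ∀ s s', a ≤ s → s ≤ s' → s' ≤ b → F s' - F s < ε → ‖f s' - f s‖ ≤ K * (F s' - F s) ^ θ)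
    {δ : ℝ} (hδ0 : 0 ≤ δ) (hδε : δ < ε) (k : ℕ) :
    ∀ x ∈ Icc a b, F x - F a ≤ k * δ → ‖f x - f a‖ ≤ k * (K * δ ^ θ) := by
  induction k with
  | zero =>
    intro x hx hFx
    have hFax : F a = F x :=
      le_antisymm (hFm ⟨le_rfl, hx.1.trans hx.2⟩ hx hx.1) (by simpa using hFx)
    simpa [hFax, Real.zero_rpow hθ.ne'] using
      hf a x le_rfl hx.1 hx.2 (by simpa [hFax] using hδ0.trans_lt hδε)
  | succ k ih =>
    intro x hx hFx
    have hstep : 0 ≤ K * δ ^ θ := by positivity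
    by_cases hxk : F x - F a ≤ k * δ
    · calc ‖f x - f a‖ ≤ k * (K * δ ^ θ) := ih x hx hxk
        _ ≤ (k + 1 : ℕ) * (K * δ ^ θ) := by gcongr; simp
    · obtain ⟨y, hy, hFy⟩ : F a + k * δ ∈ F '' Icc a x :=
        intermediate_value_Icc hx.1 (hFc.mono (Icc_subset_Icc_right hx.2))
          ⟨le_add_of_nonneg_right (by positivity), by linarith⟩
      have hyab : y ∈ Icc a b := ⟨hy.1, hy.2.trans hx.2⟩
      have hFxy : F x - F y ≤ δ := by push_cast at hFx; linarith
      have hFyx : 0 ≤ F x - F y := sub_nonneg.2 (hFm hyab hx hy.2)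
      calc ‖f x - f a‖ ≤ ‖f x - f y‖ + ‖f y - f a‖ := norm_sub_le_norm_sub_add_norm_sub _ _ _
        _ ≤ K * δ ^ θ + k * (K * δ ^ θ) := by
          gcongr
          · exact (hf y x hy.1 hy.2 hx.2 (hFxy.trans_lt hδε)).trans (by gcongr)
          · exact ih y hyab (by linarith)
        _ = (k + 1 : ℕ) * (K * δ ^ θ) := by push_cast; ring

theorem eq_of_norm_sub_le_rpow
    (hab : a ≤ b) (hFm : MonotoneOn F (Icc a b)) (hFc : ContinuousOn F (Icc a b)) (hθ : 1 < θ)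
    (hK : 0 ≤ K) (hε : 0 < ε)
    (hf : ∀ s s', a ≤ s → s ≤ s' → s' ≤ b → F s' - F s < ε → ‖f s' - f s‖ ≤ K * (F s' - F s) ^ θ) :
    f b = f a := by
  set L := F b - F a
  have hL : 0 ≤ L := sub_nonneg.2 (hFm ⟨le_rfl, hab⟩ ⟨hab, le_rfl⟩ hab)
  have hmesh : Tendsto (fun n : ℕ => L / n) atTop (𝓝 0) := tendsto_const_div_atTop_nhds_zero_nat L
  have hbound : ∀ n : ℕ, n ≠ 0 → L / n < ε → ‖f b - f a‖ ≤ K * L * (L / n) ^ (θ - 1) := by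
    intro n hn hLn
    calc ‖f b - f a‖ ≤ n * (K * (L / n) ^ θ) :=
          norm_sub_le_nat_mul_rpow_of_norm_sub_le_rpow hFm hFc (by linarith) hK hf
            (by positivity) hLn n b ⟨hab, le_rfl⟩ (mul_div_cancel₀ L (Nat.cast_ne_zero.2 hn)).ge
      _ = K * L * (L / n) ^ (θ - 1) := by
        rw [show θ = (θ - 1) + 1 by ring, Real.rpow_add' (by positivity) (by linarith),
          Real.rpow_one]
        field_simp
        ring_nf
  have hlim : Tendsto (fun n : ℕ => K * L * (L / n) ^ (θ - 1)) atTop (𝓝 0) := by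
    have := ((Real.continuousAt_rpow_const 0 (θ - 1) (Or.inr (by linarith))).tendsto.comp
      hmesh).const_mul (K * L)
    simpa [Real.zero_rpow (by linarith : θ - 1 ≠ 0)] using this
  have hnorm : ‖f b - f a‖ ≤ 0 := by
    refine ge_of_tendsto hlim ?_
    filter_upwards [hmesh.eventually (gt_mem_nhds hε), eventually_ne_atTop 0] with n hn hn0
    exact hbound n hn0 hn
  exact sub_eq_zero.1 (norm_le_zero_iff.1 hnorm)

theorem eq_of_norm_sub_le_integral_rpow {C : ℝ → ℝ} (hab : a ≤ b)
    (hC : IntervalIntegrable C volume a b) (hC0 : ∀ r ∈ Icc a b, 0 ≤ C r) (hθ : 1 < θ)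
    (hK : 0 ≤ K) (hε : 0 < ε)
    (hf : ∀ s s', a ≤ s → s ≤ s' → s' ≤ b → ∫ r in s..s', C r < ε →
      ‖f s' - f s‖ ≤ K * (∫ r in s..s', C r) ^ θ) :
    f b = f a := by
  have hCI : ∀ {s}, s ∈ Icc a b → IntervalIntegrable C volume a s := fun hs =>
    hC.mono_set (uIcc_subset_uIcc_left (Icc_subset_uIcc hs))
  have hF : ∀ {s s'}, s ∈ Icc a b → s' ∈ Icc a b →
      (∫ r in a..s', C r) - (∫ r in a..s, C r) = ∫ r in s..s', C r := fun hs hs' =>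
    intervalIntegral.integral_interval_sub_left (hCI hs') (hCI hs)
  refine eq_of_norm_sub_le_rpow (F := fun u => ∫ r in a..u, C r) hab
    (fun s hs s' hs' hss' => ?_) ?_ hθ hK hε fun s s' hs hss' hs' => ?_
  · exact sub_nonneg.1 <| (hF hs hs').symm ▸ intervalIntegral.integral_nonneg hss'
      fun r hr => hC0 r ⟨hs.1.trans hr.1, hr.2.trans hs'.2⟩
  · simpa only [uIcc_of_le hab] using intervalIntegral.continuousOn_primitive_interval' hC
      left_mem_uIcc
  · simpa only [hF ⟨hs, hss'.trans hs'⟩ ⟨hs.trans hss', hs'⟩] using hf s s' hs hss' hs'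

end Constancy

section Solutions

variable {E : Type*} [NormedAddCommGroup E] [NormedSpace ℝ E]

theorem norm_le_rpow_one_add_of_eq_integral {e g : ℝ → E} {C : ℝ → ℝ} {s t α : ℝ}
    (hst : s ≤ t) (hα0 : 0 ≤ α) (hα1 : α ≤ 1) (hg : IntervalIntegrable g volume s t)
    (hC : IntervalIntegrable C volume s t) (hC0 : ∀ r ∈ Icc s t, 0 ≤ C r)
    (he : ∀ r ∈ Icc s t, e r = ∫ q in s..r, g q)
    (hgC : ∀ r ∈ Icc s t, ‖g r‖ ≤ C r * ‖e r‖ ^ α) (hW : ∫ r in s..t, C r < 1) :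
    ‖e t‖ ≤ (∫ r in s..t, C r) ^ (1 + α) := by
  have hcont : ContinuousOn (fun r => ‖e r‖) (Icc s t) := by
    have h := intervalIntegral.continuousOn_primitive_interval' hg left_mem_uIcc
    rw [uIcc_of_le hst] at h
    exact (h.congr he).norm
  obtain ⟨r₀, hr₀, hr₀max⟩ := isCompact_Icc.exists_isMaxOn (nonempty_Icc.2 hst) hcont
  have hmax : ∀ r ∈ Icc s t, ‖e r‖ ≤ ‖e r₀‖ := fun r hr => hr₀max hr
  have hbound : ∀ r ∈ Icc s t, ‖e r‖ ≤ ‖e r₀‖ ^ α * ∫ q in s..t, C q := fun r hr =>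
    calc ‖e r‖ = ‖∫ q in s..r, g q‖ := by rw [he r hr]
      _ ≤ ∫ q in s..r, ‖g q‖ := intervalIntegral.norm_integral_le_integral_norm hr.1
      _ ≤ ∫ q in s..t, ‖g q‖ :=
        intervalIntegral.integral_mono_interval le_rfl hr.1 hr.2
          (Eventually.of_forall fun _ => norm_nonneg _) hg.norm
      _ ≤ ∫ q in s..t, C q * ‖e r₀‖ ^ α :=
        intervalIntegral.integral_mono_on hst hg.norm (hC.mul_const _) fun q hq =>
          (hgC q hq).trans (by gcongr; exacts [hC0 q hq, hmax q hq])
      _ = ‖e r₀‖ ^ α * ∫ q in s..t, C q := by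
        rw [intervalIntegral.integral_mul_const, mul_comm]
  exact (hmax t ⟨hst, le_rfl⟩).trans <| Real.le_rpow_one_add_of_le_rpow_mul (norm_nonneg _)
    (intervalIntegral.integral_nonneg hst hC0) hW hα0 hα1 (hbound r₀ hr₀)

def IsSolution (b : ℝ → E → E) (γ : ℝ → E) (s t : ℝ) (u : ℝ → E) : Prop :=
  IntervalIntegrable (fun r => b r (u r)) volume s t ∧
    ∀ r ∈ Icc s t, u r = u s + (∫ q in s..r, b q (u q)) + γ r - γ s

variable {b : ℝ → E → E} {γ : ℝ → E} {s t : ℝ} {u v : ℝ → E}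

theorem isSolution_of_eq_add_integral {x : E} (hst : s ≤ t)
    (hint : IntervalIntegrable (fun r => b r (u r)) volume s t)
    (hu : ∀ r ∈ Icc s t, u r = x + (∫ q in s..r, b q (u q)) + γ r - γ s) :
    IsSolution b γ s t u := by
  have hus : u s = x := by simpa using hu s ⟨le_rfl, hst⟩
  exact ⟨hint, hus ▸ hu⟩

theorem IsSolution.mono {s' t' : ℝ} (hu : IsSolution b γ s t u) (hs : s ≤ s') (hst' : s' ≤ t')
    (ht : t' ≤ t) : IsSolution b γ s' t' u := by
  have hint : ∀ {c d}, s ≤ c → c ≤ d → d ≤ t →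
      IntervalIntegrable (fun r => b r (u r)) volume c d := fun hc hcd hd =>
    hu.1.mono_set (uIcc_subset_uIcc (Icc_subset_uIcc ⟨hc, hcd.trans hd⟩)
      (Icc_subset_uIcc ⟨hc.trans hcd, hd⟩))
  refine ⟨hint hs hst' ht, fun r hr => ?_⟩
  rw [hu.2 r ⟨hs.trans hr.1, hr.2.trans ht⟩, hu.2 s' ⟨hs, hst'.trans ht⟩,
    ← intervalIntegral.integral_add_adjacent_intervals (hint le_rfl hs (hst'.trans ht))
      (hint hs hr.1 (hr.2.trans ht))]
  abel

theorem IsSolution.norm_sub_le {C : ℝ → ℝ} {α : ℝ} (hu : IsSolution b γ s t u)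
    (hv : IsSolution b γ s t v) (huv : u s = v s) (hst : s ≤ t) (hα0 : 0 ≤ α) (hα1 : α ≤ 1)
    (hC : IntervalIntegrable C volume s t) (hC0 : ∀ r ∈ Icc s t, 0 ≤ C r)
    (hb : ∀ r ∈ Icc s t, ∀ x y, ‖b r x - b r y‖ ≤ C r * ‖x - y‖ ^ α)
    (hW : ∫ r in s..t, C r < 1) :
    ‖u t - v t‖ ≤ (∫ r in s..t, C r) ^ (1 + α) := by
  refine norm_le_rpow_one_add_of_eq_integral (g := fun r => b r (u r) - b r (v r)) hst hα0 hα1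
    (hu.1.sub hv.1) hC hC0 (fun r hr => ?_) (fun r hr => hb r hr _ _) hW
  have hsub : uIcc s r ⊆ uIcc s t := uIcc_subset_uIcc_left (Icc_subset_uIcc hr)
  rw [hu.2 r hr, hv.2 r hr, huv,
    intervalIntegral.integral_sub (hu.1.mono_set hsub) (hv.1.mono_set hsub)]
  abel

theorem norm_flow_sub_flow_le {Φ : ℝ → ℝ → E → E} {C : ℝ → ℝ} {z : ℝ → E} {s' α β N : ℝ}
    (hz : IsSolution b γ s s' z) (hΦ : IsSolution b γ s s' (fun r => Φ s r (z s)))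
    (hΦs : Φ s s (z s) = z s) (hsemi : Φ s t (z s) = Φ s' t (Φ s s' (z s)))
    (hHolder : ∀ x y, ‖Φ s' t x - Φ s' t y‖ ≤ N * ‖x - y‖ ^ β) (hN : 0 ≤ N) (hβ : 0 ≤ β)
    (hss' : s ≤ s') (hα0 : 0 ≤ α) (hα1 : α ≤ 1)
    (hC : IntervalIntegrable C volume s s') (hC0 : ∀ r ∈ Icc s s', 0 ≤ C r)
    (hb : ∀ r ∈ Icc s s', ∀ x y, ‖b r x - b r y‖ ≤ C r * ‖x - y‖ ^ α)
    (hW : ∫ r in s..s', C r < 1) :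
    ‖Φ s' t (z s') - Φ s t (z s)‖ ≤ N * (∫ r in s..s', C r) ^ (β * (1 + α)) := by
  calc ‖Φ s' t (z s') - Φ s t (z s)‖ ≤ N * ‖z s' - Φ s s' (z s)‖ ^ β := hsemi ▸ hHolder _ _
    _ ≤ N * ((∫ r in s..s', C r) ^ (1 + α)) ^ β := by
      gcongr
      exact hz.norm_sub_le hΦ hΦs.symm hss' hα0 hα1 hC hC0 hb hW
    _ = N * (∫ r in s..s', C r) ^ (β * (1 + α)) := by
      rw [← Real.rpow_mul (intervalIntegral.integral_nonneg hss' hC0), mul_comm β]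

end Solutions

theorem stmt_6_general {d : ℕ}
    (γ : ℝ → EuclideanSpace ℝ (Fin d))
    (b : ℝ → EuclideanSpace ℝ (Fin d) → EuclideanSpace ℝ (Fin d))
    (C : ℝ → ℝ) (α β N : ℝ)
    (hα : α ∈ Ioc (0:ℝ) 1) (hβ : β ∈ Ioc (0:ℝ) 1)
    (hβα : 1 < β * (1 + α))
    (hC0 : ∀ t, 0 ≤ C t)
    (hCint : IntegrableOn C (Icc 0 1))
    (hb : ∀ t ∈ Icc (0:ℝ) 1, ∀ x y, ‖b t x - b t y‖ ≤ C t * ‖x - y‖ ^ α)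
    (Φ : ℝ → ℝ → EuclideanSpace ℝ (Fin d) → EuclideanSpace ℝ (Fin d))
    (hΦint : ∀ s t, 0 ≤ s → s ≤ t → t ≤ 1 → ∀ x,
      IntervalIntegrable (fun r => b r (Φ s r x)) volume s t)
    (hflow : ∀ s t, 0 ≤ s → s ≤ t → t ≤ 1 → ∀ x,
      Φ s t x = x + (∫ r in s..t, b r (Φ s r x)) + γ t - γ s)
    (hsemi : ∀ s r t, 0 ≤ s → s ≤ r → r ≤ t → t ≤ 1 → ∀ x,
      Φ s t x = Φ r t (Φ s r x))
    (hHolder : ∀ s t, 0 ≤ s → s ≤ t → t ≤ 1 → ∀ x y,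
      ‖Φ s t x - Φ s t y‖ ≤ N * ‖x - y‖ ^ β)
    (S T : ℝ) (hS : 0 ≤ S) (hST : S ≤ T) (hT : T ≤ 1)
    (y : EuclideanSpace ℝ (Fin d)) (z : ℝ → EuclideanSpace ℝ (Fin d))
    (hzint : IntervalIntegrable (fun r => b r (z r)) volume S T)
    (hz : ∀ t ∈ Icc S T, z t = y + (∫ r in S..t, b r (z r)) + γ t - γ S) :
    ∀ t ∈ Icc S T, z t = Φ S t y := by
  rintro t ⟨hSt, htT⟩
  have ht1 : t ≤ 1 := htT.trans hT
  have hΦid : ∀ s, 0 ≤ s → s ≤ 1 → ∀ x, Φ s s x = x := fun s h0 h1 x => by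
    simpa using hflow s s h0 le_rfl h1 x
  have hCI : ∀ s s', 0 ≤ s → s ≤ s' → s' ≤ 1 → IntervalIntegrable C volume s s' :=
    fun s s' h0 hss' h1 => (intervalIntegrable_iff_integrableOn_Icc_of_le hss').2
      (hCint.mono_set (Icc_subset_Icc h0 h1))
  have hzsol : IsSolution b γ S T z := isSolution_of_eq_add_integral hST hzint hz
  -- `N` can be negative (only when `d = 0`), so the Hölder constant used is `max N 0`.
  have hconst : Φ t t (z t) = Φ S t (z S) := by
    refine eq_of_norm_sub_le_integral_rpow (f := fun s => Φ s t (z s)) hSt (hCI S t hS hSt ht1)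
      (fun r _ => hC0 r) hβα (le_max_right N 0) zero_lt_one fun s s' hs hss' hs' hW => ?_
    have h0s : 0 ≤ s := hS.trans hs
    have hs'1 : s' ≤ 1 := hs'.trans ht1
    exact norm_flow_sub_flow_le (hzsol.mono hs hss' (hs'.trans htT))
      (isSolution_of_eq_add_integral hss' (hΦint s s' h0s hss' hs'1 _)
        fun r hr => hflow s r h0s hr.1 (hr.2.trans hs'1) _)
      (hΦid s h0s (hss'.trans hs'1) _) (hsemi s s' t h0s hss' hs' ht1 _)
      (fun x x' => (hHolder s' t (h0s.trans hss') hs' ht1 x x').trans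
        (by gcongr; exact le_max_left N 0))
      (le_max_right N 0) hβ.1.le hss' hα.1.le hα.2 (hCI s s' h0s hss' hs'1) (fun r _ => hC0 r)
      (fun r hr => hb r ⟨h0s.trans hr.1, hr.2.trans hs'1⟩) hW
  calc z t = Φ t t (z t) := (hΦid t (hS.trans hSt) ht1 _).symm
    _ = Φ S t (z S) := hconst
    _ = Φ S t y := by rw [show z S = y by simpa using hz S ⟨le_rfl, hST⟩]

/-- Path-by-path uniqueness from a Hölder continuous semiflow (functional case):
if the perturbed ODE `y_t = y_0 + ∫_0^t b_r(y_r) dr + γ_t` with `b_r` globally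
`α`-Hölder in space (with `L¹` in time Hölder constants `C`) admits a semiflow `Φ`
that is globally `β`-Hölder in space uniformly in times, with `β(1+α) > 1`, then
every solution on `[S,T]` with initial condition `y` coincides with `Φ_{S→·}(y)`. -/
theorem stmt_6 {d : ℕ}
    (γ : ℝ → EuclideanSpace ℝ (Fin d))
    (b : ℝ → EuclideanSpace ℝ (Fin d) → EuclideanSpace ℝ (Fin d))
    (C : ℝ → ℝ) (α β N : ℝ)
    (hα : α ∈ Ioc (0:ℝ) 1) (hβ : β ∈ Ioc (0:ℝ) 1)
    (hβα : 1 < β * (1 + α))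
    (hγmeas : Measurable γ) (hγbdd : ∃ M, ∀ t, ‖γ t‖ ≤ M)
    (hC0 : ∀ t, 0 ≤ C t)
    (hCint : IntegrableOn C (Icc 0 1))
    (hb : ∀ t ∈ Icc (0:ℝ) 1, ∀ x y, ‖b t x - b t y‖ ≤ C t * ‖x - y‖ ^ α)
    (Φ : ℝ → ℝ → EuclideanSpace ℝ (Fin d) → EuclideanSpace ℝ (Fin d))
    (hΦint : ∀ s t, 0 ≤ s → s ≤ t → t ≤ 1 → ∀ x,
      IntervalIntegrable (fun r => b r (Φ s r x)) volume s t)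
    (hflow : ∀ s t, 0 ≤ s → s ≤ t → t ≤ 1 → ∀ x,
      Φ s t x = x + (∫ r in s..t, b r (Φ s r x)) + γ t - γ s)
    (hsemi : ∀ s r t, 0 ≤ s → s ≤ r → r ≤ t → t ≤ 1 → ∀ x,
      Φ s t x = Φ r t (Φ s r x))
    (hHolder : ∀ s t, 0 ≤ s → s ≤ t → t ≤ 1 → ∀ x y,
      ‖Φ s t x - Φ s t y‖ ≤ N * ‖x - y‖ ^ β)
    (S T : ℝ) (hS : 0 ≤ S) (hST : S ≤ T) (hT : T ≤ 1)
    (y : EuclideanSpace ℝ (Fin d)) (z : ℝ → EuclideanSpace ℝ (Fin d))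
    (hzint : IntervalIntegrable (fun r => b r (z r)) volume S T)
    (hz : ∀ t ∈ Icc S T, z t = y + (∫ r in S..t, b r (z r)) + γ t - γ S) :
    ∀ t ∈ Icc S T, z t = Φ S t y :=
  stmt_6_general γ b C α β N hα hβ hβα hC0 hCint hb Φ hΦint hflow hsemi hHolder S T hS hST hT y z
    hzint hz
end

section
/- Embedding $D^{\beta,p} \hookrightarrow N^{\beta,p}$: Let $E$ be a normed space, $\beta \in (0,1]$, $p \in [1,\infty)$ with $\beta > 1/p$, and let $f : [0,1] \to E$ be such that there exists a continuous control $w$ with $\|f_t - f_s\|_E \le |t-s|^{\beta - 1/p} w(s,t)^{1/p}$ for all $0 \le s \le t \le 1$. Then for every $h \in (0,1)$, $\int_0^{1-h} \|f_{t+h} - f_t\|_E^p \, dt \le 2 h^{\beta p} w(0,1)$; i.e. the Besov–Nikolskii seminorm satisfies $[f]_{N^{\beta,p}}^p \le 2\, w(0,1)$. -/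
open Set

/-- Embedding `D^{β,p} ↪ N^{β,p}`: if `‖f_t - f_s‖ ≤ (t-s)^{β-1/p} w(s,t)^{1/p}` for a
control `w` and `β > 1/p`, then for every `h ∈ (0,1)`,
`∫_0^{1-h} ‖f_{t+h} - f_t‖^p dt ≤ 2 h^{βp} w(0,1)`, i.e. `[f]_{N^{β,p}}^p ≤ 2 w(0,1)`. -/
theorem stmt_10 {E : Type*} [NormedAddCommGroup E] (β p : ℝ) (f : ℝ → E)
    (w : ℝ → ℝ → ℝ)
    (hβ : β ∈ Ioc (0:ℝ) 1) (hp : 1 ≤ p) (hβp : 1 / p < β)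
    (hf : Continuous f)
    (hw0 : ∀ s t, 0 ≤ s → s ≤ t → t ≤ 1 → 0 ≤ w s t)
    (hdiag : ∀ s, w s s = 0)
    (hcont : ContinuousOn (fun q : ℝ × ℝ => w q.1 q.2)
      {q : ℝ × ℝ | 0 ≤ q.1 ∧ q.1 ≤ q.2 ∧ q.2 ≤ 1})
    (hsuper : ∀ s u t, 0 ≤ s → s ≤ u → u ≤ t → t ≤ 1 → w s u + w u t ≤ w s t)
    (hfw : ∀ s t, 0 ≤ s → s ≤ t → t ≤ 1 →
      ‖f t - f s‖ ≤ (t - s) ^ (β - 1 / p) * w s t ^ (1 / p)) :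
    ∀ h ∈ Ioo (0:ℝ) 1,
      (∫ t in (0:ℝ)..(1 - h), ‖f (t + h) - f t‖ ^ p) ≤ 2 * h ^ (β * p) * w 0 1 := by
  obtain ⟨hβ0, hβ1⟩ := hβ
  intro h hh
  obtain ⟨hh0, hh1⟩ := hh
  have hp0 : (0:ℝ) < p := lt_of_lt_of_le one_pos hp
  have h1h : (0:ℝ) ≤ 1 - h := by linarith
  -- monotonicity of w
  have wmono : ∀ s t s' t', 0 ≤ s' → s' ≤ s → s ≤ t → t ≤ t' → t' ≤ 1 →
      w s t ≤ w s' t' := by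
    intro s t s' t' h1 h2 h3 h4 h5
    have e1 := hsuper s' s t h1 h2 h3 (le_trans h4 h5)
    have e2 := hsuper s' t t' h1 (h2.trans h3) h4 h5
    have e3 := hw0 s' s h1 h2 (by linarith)
    have e4 := hw0 t t' (by linarith) h4 h5
    linarith
  -- chain superadditivity
  have chain : ∀ (M : ℕ) (d : ℕ → ℝ), (∀ j, d j ≤ d (j+1)) → 0 ≤ d 0 → d M ≤ 1 →
      ∑ j ∈ Finset.range M, w (d j) (d (j+1)) ≤ w (d 0) (d M) := by
    intro M
    induction M with
    | zero => intro d _ _ _; simp [hdiag]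
    | succ M ih =>
      intro d hd h0 h1
      have hmono : Monotone d := monotone_nat_of_le_succ hd
      have hdM : d M ≤ 1 := (hd M).trans h1
      rw [Finset.sum_range_succ]
      have e1 := ih d hd h0 hdM
      have e2 := hsuper (d 0) (d M) (d (M+1)) h0 (hmono (Nat.zero_le M)) (hd M) h1
      linarith
  obtain ⟨N, hN⟩ : ∃ N : ℕ, 1 - h ≤ N * h := by
    refine ⟨⌈(1-h)/h⌉₊, ?_⟩
    have := Nat.le_ceil ((1-h)/h)
    rw [div_le_iff₀ hh0] at this
    exact this
  obtain ⟨a, hadef⟩ : ∃ a : ℕ → ℝ, ∀ i, a i = min ((i:ℝ) * h) (1 - h) :=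
    ⟨_, fun _ => rfl⟩
  obtain ⟨b, hbdef⟩ : ∃ b : ℕ → ℝ, ∀ i, b i = min ((i:ℝ) * h) 1 :=
    ⟨_, fun _ => rfl⟩
  have ha0 : a 0 = 0 := by rw [hadef]; simp [h1h]
  have haN : a N = 1 - h := by rw [hadef]; exact min_eq_right hN
  have hamono : ∀ i, a i ≤ a (i+1) := by
    intro i
    rw [hadef, hadef]
    refine min_le_min ?_ le_rfl
    push_cast
    nlinarith [hh0.le, (Nat.cast_nonneg i : (0:ℝ) ≤ i)]
  have hbmono : ∀ i, b i ≤ b (i+1) := by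
    intro i
    rw [hbdef, hbdef]
    refine min_le_min ?_ le_rfl
    push_cast
    nlinarith [hh0.le, (Nat.cast_nonneg i : (0:ℝ) ≤ i)]
  have hbmono' : Monotone b := monotone_nat_of_le_succ hbmono
  have hb0 : ∀ i, 0 ≤ b i := by
    intro i
    rw [hbdef]
    exact le_min (by positivity) (by norm_num)
  have hb1 : ∀ i : ℕ, b i ≤ 1 := by
    intro i; rw [hbdef]; exact min_le_right _ _
  have hanonneg : ∀ i, 0 ≤ a i := by
    intro i
    rw [hadef]
    exact le_min (by positivity) h1h
  have haub : ∀ i : ℕ, a i ≤ 1 - h := by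
    intro i; rw [hadef]; exact min_le_right _ _
  -- continuity of t ↦ w t (t+h)
  have gcont : ContinuousOn (fun t => w t (t+h)) (Icc 0 (1-h)) := by
    refine hcont.comp
      ((continuous_id.prodMk (continuous_id.add continuous_const)).continuousOn) ?_
    intro t ht
    simp only [mem_Icc] at ht
    refine ⟨ht.1, ?_, ?_⟩
    · show t ≤ t + h
      linarith
    · show t + h ≤ 1
      linarith [ht.2]
  have gint : ∀ i, IntervalIntegrable (fun t => w t (t+h)) MeasureTheory.volume
      (a i) (a (i+1)) := by
    intro i
    refine (gcont.mono ?_).intervalIntegrable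
    rw [uIcc_of_le (hamono i)]
    exact Icc_subset_Icc (hanonneg i) (haub (i+1))
  have hCnn : ∀ i : ℕ, 0 ≤ w (b i) (b (i+2)) := fun i =>
    hw0 _ _ (hb0 i) (hbmono' (by omega)) (hb1 _)
  -- per-piece bound
  have piece : ∀ i : ℕ, (∫ t in a i..a (i+1), w t (t+h)) ≤ h * w (b i) (b (i+2)) := by
    intro i
    by_cases hc : (i:ℝ) * h ≤ 1 - h
    · have hai : a i = (i:ℝ) * h := by rw [hadef]; exact min_eq_left hc
      have hbi : b i = (i:ℝ) * h := by rw [hbdef]; exact min_eq_left (by linarith)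
      have hlen : a (i+1) - a i ≤ h := by
        have e1 : a (i+1) ≤ (i:ℝ) * h + h := by
          rw [hadef]
          refine le_trans (min_le_left _ _) ?_
          push_cast
          linarith
        rw [hai]
        linarith
      have hpt : ∀ t ∈ Icc (a i) (a (i+1)), w t (t+h) ≤ w (b i) (b (i+2)) := by
        intro t ht
        obtain ⟨ht1, ht2⟩ := ht
        have htub : t ≤ 1 - h := le_trans ht2 (haub (i+1))
        refine wmono t (t+h) (b i) (b (i+2)) (hb0 i) ?_ (by linarith) ?_ (hb1 _)
        · rw [hbi, ← hai]; exact ht1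
        · have e2 : a (i+1) + h ≤ b (i+2) := by
            rw [hadef, hbdef]
            push_cast
            refine le_min ?_ ?_
            · have := min_le_left (((i:ℝ)+1) * h) (1-h)
              linarith
            · have := min_le_right (((i:ℝ)+1) * h) (1-h)
              linarith
          linarith
      calc (∫ t in a i..a (i+1), w t (t+h))
          ≤ ∫ _t in a i..a (i+1), w (b i) (b (i+2)) :=
            intervalIntegral.integral_mono_on (hamono i) (gint i)
              intervalIntegrable_const hpt
        _ = (a (i+1) - a i) * w (b i) (b (i+2)) := by
            rw [intervalIntegral.integral_const, smul_eq_mul]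
        _ ≤ h * w (b i) (b (i+2)) :=
            mul_le_mul_of_nonneg_right hlen (hCnn i)
    · push_neg at hc
      have h1 : a i = 1 - h := by rw [hadef]; exact min_eq_right hc.le
      have h2 : a (i+1) = 1 - h := by
        rw [hadef]
        refine min_eq_right (le_trans hc.le ?_)
        push_cast
        nlinarith [hh0.le, (Nat.cast_nonneg i : (0:ℝ) ≤ i)]
      rw [h1, h2, intervalIntegral.integral_same]
      exact mul_nonneg hh0.le (hCnn i)
  -- sum of the chain pieces
  have csum : ∑ i ∈ Finset.range N, w (b i) (b (i+2)) ≤ 2 * w 0 1 := by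
    have step1 : ∑ i ∈ Finset.range N, w (b i) (b (i+2)) ≤
        ∑ i ∈ Finset.range (2*N), w (b i) (b (i+2)) :=
      Finset.sum_le_sum_of_subset_of_nonneg
        (Finset.range_subset_range.mpr (by omega)) (fun i _ _ => hCnn i)
    have parity : ∀ (c : ℕ → ℝ) (M : ℕ), ∑ i ∈ Finset.range (2*M), c i =
        (∑ j ∈ Finset.range M, c (2*j)) + ∑ j ∈ Finset.range M, c (2*j+1) := by
      intro c M
      induction M with
      | zero => simp
      | succ M ih =>
        rw [Nat.mul_succ, show 2*M+2 = (2*M+1)+1 from rfl, Finset.sum_range_succ,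
          Finset.sum_range_succ, ih, Finset.sum_range_succ, Finset.sum_range_succ]
        ring
    have even_le : ∑ j ∈ Finset.range N, w (b (2*j)) (b (2*j+2)) ≤ w 0 1 := by
      have hd : ∀ j, b (2*j) ≤ b (2*(j+1)) := fun j => hbmono' (by omega)
      have hc := chain N (fun j => b (2*j)) hd (hb0 0) (hb1 _)
      have heq : ∑ j ∈ Finset.range N, w (b (2*j)) (b (2*j+2)) =
          ∑ j ∈ Finset.range N, w (b (2*j)) (b (2*(j+1))) := by
        refine Finset.sum_congr rfl fun j _ => ?_
        rw [show 2*(j+1) = 2*j+2 from by ring]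
      rw [heq]
      refine le_trans hc ?_
      have hb00 : b 0 = 0 := by rw [hbdef]; simp
      rw [hb00]
      exact wmono 0 (b (2*N)) 0 1 le_rfl le_rfl (hb0 _) (hb1 _) le_rfl
    have odd_le : ∑ j ∈ Finset.range N, w (b (2*j+1)) (b (2*j+3)) ≤ w 0 1 := by
      have hd : ∀ j, b (2*j+1) ≤ b (2*(j+1)+1) := fun j => hbmono' (by omega)
      have hc := chain N (fun j => b (2*j+1)) hd (hb0 1) (hb1 _)
      have heq : ∑ j ∈ Finset.range N, w (b (2*j+1)) (b (2*j+3)) =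
          ∑ j ∈ Finset.range N, w (b (2*j+1)) (b (2*(j+1)+1)) := by
        refine Finset.sum_congr rfl fun j _ => ?_
        rw [show 2*(j+1)+1 = 2*j+3 from by ring]
      rw [heq]
      refine le_trans hc ?_
      exact wmono (b 1) (b (2*N+1)) 0 1 le_rfl (hb0 1) (hbmono' (by omega)) (hb1 _) le_rfl
    calc ∑ i ∈ Finset.range N, w (b i) (b (i+2))
        ≤ ∑ i ∈ Finset.range (2*N), w (b i) (b (i+2)) := step1
      _ = (∑ j ∈ Finset.range N, w (b (2*j)) (b (2*j+2))) +
          ∑ j ∈ Finset.range N, w (b (2*j+1)) (b (2*j+3)) :=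
          parity (fun i => w (b i) (b (i+2))) N
      _ ≤ w 0 1 + w 0 1 := add_le_add even_le odd_le
      _ = 2 * w 0 1 := by ring
  -- integral bound for w
  have wint : (∫ t in (0:ℝ)..(1-h), w t (t+h)) ≤ 2 * h * w 0 1 := by
    have hsum : (∫ t in (0:ℝ)..(1-h), w t (t+h)) =
        ∑ i ∈ Finset.range N, ∫ t in a i..a (i+1), w t (t+h) := by
      rw [intervalIntegral.sum_integral_adjacent_intervals (fun i _ => gint i), ha0, haN]
    rw [hsum]
    calc ∑ i ∈ Finset.range N, ∫ t in a i..a (i+1), w t (t+h)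
        ≤ ∑ i ∈ Finset.range N, h * w (b i) (b (i+2)) :=
          Finset.sum_le_sum fun i _ => piece i
      _ = h * ∑ i ∈ Finset.range N, w (b i) (b (i+2)) := by rw [Finset.mul_sum]
      _ ≤ h * (2 * w 0 1) := mul_le_mul_of_nonneg_left csum hh0.le
      _ = 2 * h * w 0 1 := by ring
  -- pointwise bound
  have hpt : ∀ t ∈ Icc (0:ℝ) (1-h), ‖f (t+h) - f t‖ ^ p ≤ h ^ (β*p-1) * w t (t+h) := by
    intro t ht
    obtain ⟨ht1, ht2⟩ := ht
    have h1 := hfw t (t+h) ht1 (by linarith) (by linarith)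
    rw [add_sub_cancel_left] at h1
    have hwn : 0 ≤ w t (t+h) := hw0 t (t+h) ht1 (by linarith) (by linarith)
    calc ‖f (t+h) - f t‖ ^ p
        ≤ (h ^ (β-1/p) * w t (t+h) ^ (1/p)) ^ p :=
          Real.rpow_le_rpow (norm_nonneg _) h1 hp0.le
      _ = h ^ ((β-1/p)*p) * w t (t+h) := by
          rw [Real.mul_rpow (by positivity) (by positivity),
            ← Real.rpow_mul hh0.le, ← Real.rpow_mul hwn,
            one_div_mul_cancel hp0.ne', Real.rpow_one]
      _ = h ^ (β*p-1) * w t (t+h) := by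
          congr 1
          rw [show (β-1/p)*p = β*p - (1/p)*p from by ring, one_div_mul_cancel hp0.ne']
  -- integrability of both sides
  have lint : IntervalIntegrable (fun t => ‖f (t+h) - f t‖ ^ p)
      MeasureTheory.volume 0 (1-h) := by
    refine Continuous.intervalIntegrable ?_ _ _
    have hbase : Continuous fun t => ‖f (t+h) - f t‖ :=
      ((hf.comp (continuous_id.add continuous_const)).sub hf).norm
    exact hbase.rpow_const fun x => Or.inr hp0.le
  have rint : IntervalIntegrable (fun t => h ^ (β*p-1) * w t (t+h))
      MeasureTheory.volume 0 (1-h) := by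
    refine ContinuousOn.intervalIntegrable ?_
    rw [uIcc_of_le h1h]
    exact continuousOn_const.mul gcont
  calc (∫ t in (0:ℝ)..(1-h), ‖f (t+h) - f t‖ ^ p)
      ≤ ∫ t in (0:ℝ)..(1-h), h ^ (β*p-1) * w t (t+h) :=
        intervalIntegral.integral_mono_on h1h lint rint hpt
    _ = h ^ (β*p-1) * ∫ t in (0:ℝ)..(1-h), w t (t+h) := by
        rw [intervalIntegral.integral_const_mul]
    _ ≤ h ^ (β*p-1) * (2 * h * w 0 1) :=
        mul_le_mul_of_nonneg_left wint (Real.rpow_nonneg hh0.le _)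
    _ = 2 * h ^ (β * p) * w 0 1 := by
        rw [show β*p = (β*p-1)+1 from by ring, Real.rpow_add hh0, Real.rpow_one]
        ring
end

section
/- Besov–Nikolskii embedding into $p$-variation implies reverse Besov bound: for $\beta \in (0,1)$ and $f : [0,1] \to E$ of finite $(1/\beta)$-variation, one has $f \in N^{\beta, 1/\beta}$ with $[f]_{N^{\beta,1/\beta}}^{1/\beta} \le 2 \|f\|_{(1/\beta)\text{-var}}^{1/\beta}$; i.e. for every $h \in (0,1)$, $\int_0^{1-h} \|f_{t+h} - f_t\|_E^{1/\beta} dt \le 2 h \, \|f\|_{(1/\beta)\text{-var}}^{1/\beta}$. -/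
open Set

/-- Partition sums `(∑ ‖f(τ_{i+1}) - f(τ_i)‖^p)^{1/p}` over partitions of `[s,t]`;
its least upper bound is the `p`-variation seminorm `‖f‖_{p-var;[s,t]}`. -/
noncomputable def pVarSet {F : Type*} [NormedAddCommGroup F] (p : ℝ) (f : ℝ → F)
    (s t : ℝ) : Set ℝ :=
  {v | ∃ (n : ℕ) (τ : Fin (n + 1) → ℝ), Monotone τ ∧ τ 0 = s ∧ τ (Fin.last n) = t ∧
    v = (∑ i : Fin n, ‖f (τ i.succ) - f (τ i.castSucc)‖ ^ p) ^ (1 / p)}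

lemma pvar_grid_bound {E : Type*} [NormedAddCommGroup E] {β : ℝ} {f : ℝ → E} {V : ℝ}
    (hβ0 : 0 < β) (hV : IsLUB (pVarSet (1 / β) f 0 1) V)
    (m : ℕ) (σ : Fin (m + 1) → ℝ) (hσ : Monotone σ)
    (h0 : 0 ≤ σ 0) (h1 : σ (Fin.last m) ≤ 1) :
    ∑ i : Fin m, ‖f (σ i.succ) - f (σ i.castSucc)‖ ^ (1 / β) ≤ V ^ (1 / β) := by
  set q : ℝ := 1 / β with hqdef
  have hq0 : 0 < q := by positivity
  set τ : Fin (m + 3) → ℝ := Fin.cons 0 (Fin.snoc σ 1) with hτdef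
  have hτsucc : ∀ k : Fin (m + 2), τ k.succ = (Fin.snoc σ (1:ℝ) : Fin (m+2) → ℝ) k := fun k => by rw [hτdef]; exact Fin.cons_succ _ _ _
  have hτcs : ∀ k : Fin (m + 1), (Fin.snoc σ (1:ℝ) : Fin (m+2) → ℝ) k.castSucc = σ k := fun k =>
    Fin.snoc_castSucc _ _ _
  have hτmono : Monotone τ := by
    rw [Fin.monotone_iff_le_succ]
    intro j
    induction j using Fin.cases with
    | zero =>
        have e : τ (0 : Fin (m+2)).succ = σ 0 := by
          rw [hτsucc]
          rw [show (0 : Fin (m+2)) = Fin.castSucc (0 : Fin (m+1)) from Fin.castSucc_zero.symm]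
          exact hτcs 0
        calc τ (Fin.castSucc (0 : Fin (m+2))) = 0 := by simp [hτdef]
          _ ≤ σ 0 := h0
          _ = τ (0 : Fin (m+2)).succ := e.symm
    | succ k =>
        have e1 : τ (Fin.castSucc k.succ) = σ k := by
          rw [← Fin.succ_castSucc, hτsucc, hτcs]
        rw [e1]
        induction k using Fin.lastCases with
        | last =>
            have : τ (Fin.last m).succ.succ = 1 := by
              rw [hτsucc, Fin.succ_last, Fin.snoc_last]
            rw [this]; exact h1
        | cast k' =>
            have : τ (Fin.castSucc k').succ.succ = σ k'.succ := by
              rw [hτsucc, Fin.succ_castSucc, hτcs]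
            rw [this]
            exact hσ (Fin.castSucc_le_succ k')
  set S : ℝ := ∑ i : Fin (m + 2), ‖f (τ i.succ) - f (τ i.castSucc)‖ ^ q with hSdef
  have hS0 : 0 ≤ S := Finset.sum_nonneg fun i _ => Real.rpow_nonneg (norm_nonneg _) _
  have hmem : S ^ β ∈ pVarSet q f 0 1 := by
    refine ⟨m + 2, τ, hτmono, by simp [hτdef], ?_, ?_⟩
    · show τ (Fin.last (m + 2)) = 1
      have : Fin.last (m + 2) = (Fin.last (m + 1)).succ := by simp [Fin.succ_last]
      rw [this, hτsucc, Fin.snoc_last]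
    · rw [← hSdef]
      congr 1
      rw [hqdef, one_div_one_div]
  have hle : S ^ β ≤ V := hV.1 hmem
  have hSV : S ≤ V ^ q := by
    have h2 := Real.rpow_le_rpow (Real.rpow_nonneg hS0 _) hle hq0.le
    rwa [← Real.rpow_mul hS0, mul_one_div_cancel hβ0.ne', Real.rpow_one] at h2
  refine le_trans ?_ hSV
  have hsplit : S = ‖f (τ (0 : Fin (m+2)).succ) - f (τ (Fin.castSucc (0 : Fin (m+2))))‖ ^ q
      + ((∑ i : Fin m, ‖f (τ (Fin.castSucc i).succ.succ) - f (τ (Fin.castSucc (Fin.castSucc i).succ))‖ ^ q)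
        + ‖f (τ (Fin.last m).succ.succ) - f (τ (Fin.castSucc (Fin.last m).succ))‖ ^ q) := by
    rw [hSdef, Fin.sum_univ_succ, Fin.sum_univ_castSucc]
  have hterm : ∀ i : Fin m,
      ‖f (τ (Fin.castSucc i).succ.succ) - f (τ (Fin.castSucc (Fin.castSucc i).succ))‖ ^ q
        = ‖f (σ i.succ) - f (σ i.castSucc)‖ ^ q := by
    intro i
    have e1 : τ (Fin.castSucc i).succ.succ = σ i.succ := by
      rw [hτsucc, Fin.succ_castSucc, hτcs]
    have e2 : τ (Fin.castSucc (Fin.castSucc i).succ) = σ i.castSucc := by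
      rw [← Fin.succ_castSucc, hτsucc, hτcs]
    rw [e1, e2]
  rw [hsplit]
  have hb1 : (0:ℝ) ≤ ‖f (τ (0 : Fin (m+2)).succ) - f (τ (Fin.castSucc (0 : Fin (m+2))))‖ ^ q :=
    Real.rpow_nonneg (norm_nonneg _) _
  have hb2 : (0:ℝ) ≤ ‖f (τ (Fin.last m).succ.succ) - f (τ (Fin.castSucc (Fin.last m).succ))‖ ^ q :=
    Real.rpow_nonneg (norm_nonneg _) _
  calc ∑ i : Fin m, ‖f (σ i.succ) - f (σ i.castSucc)‖ ^ q
      = ∑ i : Fin m, ‖f (τ (Fin.castSucc i).succ.succ) - f (τ (Fin.castSucc (Fin.castSucc i).succ))‖ ^ q := by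
        exact (Finset.sum_congr rfl fun i _ => (hterm i)).symm
    _ ≤ _ := by linarith

/-- Finite `(1/β)`-variation implies the Besov–Nikolskii bound: if `f` has
`(1/β)`-variation seminorm `V` on `[0,1]` and `β ∈ (0,1)`, then for every `h ∈ (0,1)`,
`∫_0^{1-h} ‖f_{t+h} - f_t‖^{1/β} dt ≤ 2 h V^{1/β}`, i.e.
`[f]_{N^{β,1/β}}^{1/β} ≤ 2 ‖f‖_{(1/β)-var}^{1/β}`. -/
theorem stmt_11 {E : Type*} [NormedAddCommGroup E] (β : ℝ) (f : ℝ → E) (V : ℝ)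
    (hβ : β ∈ Ioo (0:ℝ) 1) (hf : Continuous f)
    (hV : IsLUB (pVarSet (1 / β) f 0 1) V) :
    ∀ h ∈ Ioo (0:ℝ) 1,
      (∫ t in (0:ℝ)..(1 - h), ‖f (t + h) - f t‖ ^ (1 / β)) ≤ 2 * h * V ^ (1 / β) := by
  obtain ⟨hβ0, hβ1⟩ := hβ
  intro h hh
  obtain ⟨hh0, hh1⟩ := hh
  set q : ℝ := 1 / β with hqdef
  have hq0 : 0 < q := by positivity
  -- V ≥ 0
  have hV0 : 0 ≤ V := by
    have hmem : (‖f 1 - f 0‖ ^ q) ^ q⁻¹ ∈ pVarSet q f 0 1 := by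
      refine ⟨1, fun i => (i : ℕ), ?_, by simp, by simp, ?_⟩
      · intro i j hij
        exact_mod_cast Nat.cast_le.mpr (Fin.le_iff_val_le_val.mp hij)
      · rw [Fin.sum_univ_one]
        norm_num [one_div]
    exact le_trans (Real.rpow_nonneg (Real.rpow_nonneg (norm_nonneg _) _) _) (hV.1 hmem)
  have hVq : 0 ≤ V ^ q := Real.rpow_nonneg hV0 _
  set g : ℝ → ℝ := fun t => ‖f (t + h) - f t‖ ^ q with hgdef
  have hgc : Continuous g :=
    ((hf.comp (continuous_id.add continuous_const)).sub hf).norm.rpow_const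
      (fun x => Or.inr hq0.le)
  have hg0 : ∀ t, 0 ≤ g t := fun t => Real.rpow_nonneg (norm_nonneg _) _
  -- pointwise bound
  have hpt : ∀ t, 0 ≤ t → t + h ≤ 1 → g t ≤ V ^ q := by
    intro t ht0 ht1
    have := pvar_grid_bound hβ0 hV 1 (fun i => t + (i : ℕ) * h) ?mono ?lo ?hi
    case mono =>
      intro i j hij
      have hcast : ((i : ℕ) : ℝ) ≤ ((j : ℕ) : ℝ) := by exact_mod_cast Fin.le_iff_val_le_val.mp hij
      have := mul_le_mul_of_nonneg_right hcast hh0.le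
      dsimp only
      linarith
    case lo => simpa using ht0
    case hi => simpa [Fin.last] using ht1
    have hc : ‖f (t + h) - f t‖ ^ (1/β) ≤ V ^ (1/β) := by
      simpa [Fin.sum_univ_one, Fin.last, -one_div] using this
    exact hc
  set m : ℕ := ⌊(1 - h) / h⌋₊ with hmdef
  have hm1 : (m : ℝ) * h ≤ 1 - h := by
    rw [← le_div_iff₀ hh0]
    exact Nat.floor_le (div_nonneg (by linarith) hh0.le)
  have hm2 : 1 - h < ((m : ℝ) + 1) * h := by
    rw [← div_lt_iff₀ hh0]
    exact Nat.lt_floor_add_one _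
  have hint : ∀ a b : ℝ, IntervalIntegrable g MeasureTheory.volume a b :=
    fun a b => hgc.intervalIntegrable a b
  -- split the integral
  have hsplit : (∫ t in (0:ℝ)..(1 - h), g t)
      = (∫ t in (0:ℝ)..((m:ℝ)*h), g t) + ∫ t in ((m:ℝ)*h)..(1-h), g t :=
    (intervalIntegral.integral_add_adjacent_intervals (hint _ _) (hint _ _)).symm
  -- second piece
  have hp2 : (∫ t in ((m:ℝ)*h)..(1-h), g t) ≤ h * V ^ q := by
    have hb : (∫ t in ((m:ℝ)*h)..(1-h), g t) ≤ ∫ t in ((m:ℝ)*h)..(1-h), V ^ q := by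
      apply intervalIntegral.integral_mono_on hm1 (hint _ _) (intervalIntegrable_const)
      intro t ht
      exact hpt t (le_trans (by positivity) ht.1) (by linarith [ht.2])
    rw [intervalIntegral.integral_const, smul_eq_mul] at hb
    refine hb.trans (mul_le_mul_of_nonneg_right (by linarith) hVq)
  -- first piece
  have hp1 : (∫ t in (0:ℝ)..((m:ℝ)*h), g t) ≤ h * V ^ q := by
    have hsum : (∫ t in (0:ℝ)..((m:ℝ)*h), g t)
        = ∑ k ∈ Finset.range m, ∫ t in ((k:ℝ)*h)..(((k:ℝ)+1)*h), g t := by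
      have := intervalIntegral.sum_integral_adjacent_intervals
        (a := fun k : ℕ => (k : ℝ) * h) (n := m) (f := g)
        (μ := MeasureTheory.volume) (fun k _ => hint _ _)
      beta_reduce at this
      simp only [Nat.cast_zero, zero_mul] at this
      rw [← this]
      refine Finset.sum_congr rfl fun k _ => ?_
      congr 1
      push_cast
      ring
    have htrans : ∀ k : ℕ, (∫ t in ((k:ℝ)*h)..(((k:ℝ)+1)*h), g t)
        = ∫ s in (0:ℝ)..h, g (s + (k:ℝ)*h) := by
      intro k
      rw [intervalIntegral.integral_comp_add_right g ((k:ℝ)*h)]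
      congr 1
      · ring
      · ring
    have hfub : (∑ k ∈ Finset.range m, ∫ s in (0:ℝ)..h, g (s + (k:ℝ)*h))
        = ∫ s in (0:ℝ)..h, ∑ k ∈ Finset.range m, g (s + (k:ℝ)*h) :=
      (intervalIntegral.integral_finset_sum
        (fun k _ => ((hgc.comp (continuous_id.add continuous_const))).intervalIntegrable _ _)).symm
    have hbound : (∫ s in (0:ℝ)..h, ∑ k ∈ Finset.range m, g (s + (k:ℝ)*h))
        ≤ ∫ s in (0:ℝ)..h, V ^ q := by
      apply intervalIntegral.integral_mono_on hh0.le
      · exact (continuous_finset_sum _ fun k _ =>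
          hgc.comp (continuous_id.add continuous_const)).intervalIntegrable _ _
      · exact intervalIntegrable_const
      intro s hs
      have := pvar_grid_bound hβ0 hV m (fun j => s + (j : ℕ) * h) ?mono ?lo ?hi
      case mono =>
        intro i j hij
        have hcast : ((i : ℕ) : ℝ) ≤ ((j : ℕ) : ℝ) := by exact_mod_cast Fin.le_iff_val_le_val.mp hij
        have := mul_le_mul_of_nonneg_right hcast hh0.le
        dsimp only
        linarith
      case lo => simpa using hs.1
      case hi =>
        simp only [Fin.last]
        have : s + (m : ℝ) * h ≤ h + (1 - h) := by
          have := hs.2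
          linarith
        simpa using this.trans_eq (by ring)
      have hconv : (∑ i : Fin m, ‖f (s + ((i.succ : ℕ):ℝ) * h)
            - f (s + ((i.castSucc : ℕ):ℝ) * h)‖ ^ (1/β))
          = ∑ k ∈ Finset.range m, g (s + (k:ℝ)*h) := by
        rw [← Fin.sum_univ_eq_sum_range (fun k => g (s + (k:ℝ)*h)) m]
        refine Finset.sum_congr rfl fun i _ => ?_
        show _ = g (s + ((i:ℕ):ℝ) * h)
        rw [hgdef]
        have e1 : ((i.succ : ℕ):ℝ) = ((i:ℕ):ℝ) + 1 := by push_cast [Fin.val_succ]; ring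
        have e2 : ((i.castSucc : ℕ):ℝ) = ((i:ℕ):ℝ) := by simp
        rw [e1, e2]
        have e3 : s + (((i:ℕ):ℝ) + 1) * h = s + ((i:ℕ):ℝ)*h + h := by ring
        rw [e3]
      exact le_trans (le_of_eq hconv.symm) this
    calc (∫ t in (0:ℝ)..((m:ℝ)*h), g t)
        = ∫ s in (0:ℝ)..h, ∑ k ∈ Finset.range m, g (s + (k:ℝ)*h) := by
          rw [hsum, ← hfub]
          exact Finset.sum_congr rfl fun k _ => htrans k
      _ ≤ ∫ s in (0:ℝ)..h, V ^ q := hbound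
      _ = h * V ^ q := by rw [intervalIntegral.integral_const, smul_eq_mul]; ring_nf
  calc (∫ t in (0:ℝ)..(1 - h), g t) ≤ h * V ^ q + h * V ^ q := by rw [hsplit]; exact add_le_add hp1 hp2
    _ = 2 * h * V ^ q := by ring
end

section
/- One-sided Grönwall comparison for the barrier in the counterexample: let $\alpha \in (0,1)$, $\tilde q \in (1,\infty)$, $\gamma = \frac{1}{\tilde q'(1-\alpha)}$, and choose $\delta > 0$ with $\delta^\alpha/\gamma > 2\delta$. Suppose $X : [0, T] \to \mathbb{R}$ is continuous, $X_0 = x > 0$, $B : [0,T] \to \mathbb{R}$ satisfies $|B_t| \le \delta t^\gamma$ on $[0,T]$, and $X_t = x + \int_0^t s^{-1/\tilde q}\, \mathrm{sign}(X_s) |X_s|^\alpha \, ds + B_t$. If $X_s \ge \delta s^\gamma$ for all $s \le t$ (with $t \le T$), then in fact $X_t > \delta t^\gamma + (\delta t^\gamma + B_t) \ge \delta t^\gamma$. Consequently, the first exit time $\tau_x = \inf\{t > 0 : X_t \le \delta t^\gamma\} \wedge T$ satisfies $\tau_x \ge \tilde\tau := \inf\{t > 0 : |B_t| \ge \delta t^\gamma\}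 \wedge T$. -/
open Set MeasureTheory Topology

/-- One-sided Grönwall comparison for the barrier in the supercritical counterexample:
with `γ = 1/(q̃'(1-α))` and `δ^α/γ > 2δ`, if `X` solves
`X_t = x + ∫_0^t s^{-1/q̃} sign(X_s)|X_s|^α ds + B_t` with `x > 0` and `|B_t| ≤ δ t^γ`
on `[0,T]`, then whenever `X_s ≥ δ s^γ` on `(0,t]` one gets
`X_t > δ t^γ + (δ t^γ + B_t) ≥ δ t^γ`; consequently the exit times satisfy
`τ̃ ≤ τ_x` where `τ_x = inf{t > 0 : X_t ≤ δ t^γ} ∧ T` and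
`τ̃ = inf{t > 0 : |B_t| ≥ δ t^γ} ∧ T`. -/
theorem stmt_19 (α qt qt' γ δ T x : ℝ)
    (hα : α ∈ Ioo (0:ℝ) 1) (hq : 1 < qt) (hconj : 1 / qt + 1 / qt' = 1)
    (hγ : γ = 1 / (qt' * (1 - α)))
    (hδ : 0 < δ) (hδ2 : 2 * δ < δ ^ α / γ)
    (hT : 0 < T) (hx : 0 < x)
    (X B : ℝ → ℝ)
    (hXcont : ContinuousOn X (Icc 0 T)) (hBcont : ContinuousOn B (Icc 0 T))
    (hB0 : B 0 = 0)
    (hBbd : ∀ t ∈ Icc (0:ℝ) T, |B t| ≤ δ * t ^ γ)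
    (hint : ∀ t ∈ Icc (0:ℝ) T,
      IntervalIntegrable (fun s => s ^ (-(1 / qt)) * Real.sign (X s) * |X s| ^ α)
        volume 0 t)
    (hX : ∀ t ∈ Icc (0:ℝ) T,
      X t = x + (∫ s in (0:ℝ)..t, s ^ (-(1 / qt)) * Real.sign (X s) * |X s| ^ α) + B t) :
    (∀ t ∈ Ioc (0:ℝ) T, (∀ s ∈ Ioc (0:ℝ) t, δ * s ^ γ ≤ X s) →
      δ * t ^ γ + (δ * t ^ γ + B t) < X t ∧
      δ * t ^ γ ≤ δ * t ^ γ + (δ * t ^ γ + B t)) ∧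
    sInf ({t | 0 < t ∧ t ≤ T ∧ δ * t ^ γ ≤ |B t|} ∪ {T}) ≤
      sInf ({t | 0 < t ∧ t ≤ T ∧ X t ≤ δ * t ^ γ} ∪ {T}) := by
  obtain ⟨hα0, hα1⟩ := hα
  have hqt0 : (0:ℝ) < qt := lt_trans one_pos hq
  have hq'inv : 1 / qt' = 1 - 1 / qt := by linarith
  have hq'invpos : 0 < 1 / qt' := by
    rw [hq'inv]
    have : 1 / qt < 1 := by rw [div_lt_one hqt0]; exact hq
    linarith
  have hqt' : 0 < qt' := one_div_pos.mp hq'invpos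
  have h1α : 0 < 1 - α := by linarith
  have hγpos : 0 < γ := by rw [hγ]; positivity
  have hγ1 : γ * (1 - α) = 1 / qt' := by
    rw [hγ]; field_simp
  have hexp : -(1 / qt) + γ * α = γ - 1 := by
    have h2 : γ * (1 - α) = 1 - 1 / qt := by rw [hγ1, hq'inv]
    nlinarith [h2]
  -- the key one-sided Grönwall step
  have key : ∀ t ∈ Ioc (0:ℝ) T, (∀ s ∈ Ioc (0:ℝ) t, δ * s ^ γ ≤ X s) →
      δ * t ^ γ + (δ * t ^ γ + B t) < X t := by
    intro t ht hs
    have htpos := ht.1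
    have htT := ht.2
    have hint_t := hint t ⟨htpos.le, htT⟩
    have hXt := hX t ⟨htpos.le, htT⟩
    have hfint : IntervalIntegrable (fun s : ℝ => δ ^ α * s ^ (γ - 1)) volume 0 t :=
      (intervalIntegral.intervalIntegrable_rpow' (by linarith)).const_mul _
    have hle : (fun s : ℝ => δ ^ α * s ^ (γ - 1)) ≤ᵐ[volume.restrict (Icc (0:ℝ) t)]
        fun s => s ^ (-(1 / qt)) * Real.sign (X s) * |X s| ^ α := by
      have h0 : ∀ᵐ s ∂(volume.restrict (Icc (0:ℝ) t)), s ≠ 0 := by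
        refine ae_restrict_of_ae ?_
        refine ae_iff.mpr ?_
        simp
      filter_upwards [h0, ae_restrict_mem measurableSet_Icc] with s hs0 hsmem
      have hspos : 0 < s := lt_of_le_of_ne hsmem.1 (Ne.symm hs0)
      have hXs : δ * s ^ γ ≤ X s := hs s ⟨hspos, hsmem.2⟩
      have hsγ : 0 < s ^ γ := Real.rpow_pos_of_pos hspos γ
      have hXpos : 0 < X s := lt_of_lt_of_le (by positivity) hXs
      rw [Real.sign_of_pos hXpos, abs_of_pos hXpos, mul_one]
      have h1 : δ ^ α * s ^ (γ * α) ≤ X s ^ α := by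
        have : (δ * s ^ γ) ^ α ≤ X s ^ α :=
          Real.rpow_le_rpow (by positivity) hXs hα0.le
        calc δ ^ α * s ^ (γ * α) = (δ * s ^ γ) ^ α := by
              rw [Real.mul_rpow hδ.le hsγ.le, ← Real.rpow_mul hspos.le]
        _ ≤ X s ^ α := this
      calc δ ^ α * s ^ (γ - 1) = s ^ (-(1 / qt)) * (δ ^ α * s ^ (γ * α)) := by
            rw [mul_comm (s ^ (-(1/qt))), mul_assoc, ← Real.rpow_add hspos, ← hexp]
            ring_nf
      _ ≤ s ^ (-(1 / qt)) * X s ^ α :=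
            mul_le_mul_of_nonneg_left h1 (Real.rpow_nonneg hspos.le _)
    have hmono := intervalIntegral.integral_mono_ae_restrict htpos.le hfint hint_t hle
    have hcalc : (∫ s in (0:ℝ)..t, δ ^ α * s ^ (γ - 1)) = δ ^ α * (t ^ γ / γ) := by
      rw [intervalIntegral.integral_const_mul, integral_rpow (Or.inl (by linarith))]
      have h1 : γ - 1 + 1 = γ := by ring
      rw [h1, Real.zero_rpow hγpos.ne']
      ring
    have htγ : 0 < t ^ γ := Real.rpow_pos_of_pos htpos γ
    have hlt : 2 * δ * t ^ γ < δ ^ α * (t ^ γ / γ) := by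
      have h2 : 2 * δ * t ^ γ < (δ ^ α / γ) * t ^ γ := by nlinarith
      calc 2 * δ * t ^ γ < (δ ^ α / γ) * t ^ γ := h2
      _ = δ ^ α * (t ^ γ / γ) := by ring
    rw [hXt]
    rw [hcalc] at hmono
    linarith
  -- X stays strictly above the barrier on all of (0, T]
  have hX0 : X 0 = x := by
    have h := hX 0 ⟨le_refl 0, hT.le⟩
    simpa [intervalIntegral.integral_same, hB0] using h
  have hgood : ∀ s ∈ Ioc (0:ℝ) T, δ * s ^ γ < X s := by
    by_contra hcon
    push_neg at hcon
    obtain ⟨t0, ht0, hle0⟩ := hcon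
    have hφcont : ContinuousOn (fun s => X s - δ * s ^ γ) (Icc 0 T) := by
      refine hXcont.sub (continuousOn_const.mul ?_)
      exact ContinuousOn.rpow_const continuousOn_id (fun y _ => Or.inr hγpos.le)
    set S : Set ℝ := Icc 0 T ∩ (fun s => X s - δ * s ^ γ) ⁻¹' Iic 0 with hS
    have hSclosed : IsClosed S :=
      hφcont.preimage_isClosed_of_isClosed isClosed_Icc isClosed_Iic
    have hSne : S.Nonempty := ⟨t0, ⟨ht0.1.le, ht0.2⟩, by simpa using hle0⟩
    have hSbdd : BddBelow S := ⟨0, fun y hy => hy.1.1⟩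
    set u := sInf S with hu_def
    have hu : u ∈ S := hSclosed.csInf_mem hSne hSbdd
    have huIcc : u ∈ Icc (0:ℝ) T := hu.1
    have huX : X u ≤ δ * u ^ γ := by have := hu.2; simpa [sub_nonpos] using this
    have hupos : 0 < u := by
      rcases lt_or_eq_of_le huIcc.1 with h | h
      · exact h
      · exfalso
        rw [← h] at huX
        rw [hX0, Real.zero_rpow hγpos.ne'] at huX
        simp at huX
        linarith
    have hlt_u : ∀ s : ℝ, 0 < s → s < u → δ * s ^ γ < X s := by
      intro s hs1 hs2
      by_contra h
      push_neg at h
      have hmem : s ∈ S :=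
        ⟨⟨hs1.le, le_trans hs2.le huIcc.2⟩, by simpa [sub_nonpos] using h⟩
      exact absurd (csInf_le hSbdd hmem) (not_le.mpr hs2)
    -- left limit: δ u^γ ≤ X u
    have hne : (𝓝[Ioo (0:ℝ) u] u).NeBot := right_nhdsWithin_Ioo_neBot hupos
    have hXtend : Filter.Tendsto X (𝓝[Ioo (0:ℝ) u] u) (𝓝 (X u)) :=
      (hXcont u huIcc).mono (fun s hss => ⟨hss.1.le, le_trans hss.2.le huIcc.2⟩)
    have hgtend : Filter.Tendsto (fun s : ℝ => δ * s ^ γ) (𝓝[Ioo (0:ℝ) u] u)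
        (𝓝 (δ * u ^ γ)) := by
      refine Filter.Tendsto.mono_left ?_ nhdsWithin_le_nhds
      exact (continuousAt_const.mul (Real.continuousAt_rpow_const u γ (Or.inl hupos.ne'))).tendsto
    have hXu : δ * u ^ γ ≤ X u := by
      refine le_of_tendsto_of_tendsto hgtend hXtend ?_
      filter_upwards [self_mem_nhdsWithin] with s hss
      exact (hlt_u s hss.1 hss.2).le
    have hkey := key u ⟨hupos, huIcc.2⟩ (fun s hss => by
      rcases lt_or_eq_of_le hss.2 with h | h
      · exact (hlt_u s hss.1 h).le
      · rw [h]; exact hXu)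
    have hb := abs_le.mp (hBbd u huIcc)
    linarith [hb.1]
  refine ⟨fun t ht h => ⟨key t ht h, ?_⟩, ?_⟩
  · have hb := abs_le.mp (hBbd t ⟨ht.1.le, ht.2⟩)
    linarith [hb.1]
  · refine le_csInf ⟨T, Or.inr rfl⟩ ?_
    rintro b hb
    rcases hb with hb | hb
    · exact absurd hb.2.2 (not_le.mpr (hgood b ⟨hb.1, hb.2.1⟩))
    · rw [mem_singleton_iff] at hb
      subst hb
      refine csInf_le ⟨0, ?_⟩ (Or.inr rfl)
      rintro y (hy | hy)
      · exact hy.1.le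
      · rw [mem_singleton_iff] at hy; subst hy; exact hT.le
end
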